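/- With the zero-subspace transformation and (A,B,C) of relative degree ρ, for every s ∈ 𝕜 the (ρ−1)×(ρ−1) matrix obtained from s·I_ρ − A_ξ by deleting its last row and its first column has determinant (−1)^(ρ−1); in particular this determinant is a nonzero constant (±1) independent of s. -/
import Mathlib

open Matrix

/-- For every `s`, the `(ρ-1) × (ρ-1)` matrix obtained from
`s • I_ρ - A_ξ` by deleting its last row and first column has determinant `(-1) ^ (ρ - 1)`,
a nonzero constant independent of `s`. -/
theorem stmt8 {𝕜 : Type*} [Field 𝕜] {n ρ : ℕ} (hn : 1 ≤ n) (hρ : 1 ≤ ρ) (hρn : ρ ≤ n)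
    (A : Matrix (Fin n) (Fin n) 𝕜) (B : Matrix (Fin n) (Fin 1) 𝕜)
    (C : Matrix (Fin 1) (Fin n) 𝕜)
    (hrd : ∀ i : ℕ, i + 2 ≤ ρ → C * A ^ i * B = 0)
    (hrd' : C * A ^ (ρ - 1) * B ≠ 0)
    (Cbar : Matrix (Fin ρ) (Fin n) 𝕜)
    (hCbar : ∀ (i : Fin ρ) (j : Fin n), Cbar i j = (C * A ^ (i : ℕ)) 0 j)
    (Bz : Matrix (Fin (n - ρ)) (Fin n) 𝕜) (hBz : Bz * B = 0)
    (T : Matrix (Fin n) (Fin n) 𝕜)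
    (hT : ∀ (i : Fin n) (j : Fin n),
      T i j = if h : (i : ℕ) < n - ρ then Bz ⟨i, h⟩ j
              else Cbar ⟨(i : ℕ) - (n - ρ), by omega⟩ j)
    (hTinv : IsUnit T.det)
    (Seta : Matrix (Fin n) (Fin (n - ρ)) 𝕜)
    (hSeta : ∀ (i : Fin n) (k : Fin (n - ρ)), Seta i k = T⁻¹ i ⟨(k : ℕ), by omega⟩)
    (Sxi : Matrix (Fin n) (Fin ρ) 𝕜)
    (hSxi : ∀ (i : Fin n) (k : Fin ρ), Sxi i k = T⁻¹ i ⟨n - ρ + (k : ℕ), by omega⟩)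
    (Axi : Matrix (Fin ρ) (Fin ρ) 𝕜)
    (hAxi : Axi = Cbar * A * Sxi)
    :
    ∀ (s : 𝕜) (N : Matrix (Fin (ρ - 1)) (Fin (ρ - 1)) 𝕜),
      (∀ i j : Fin (ρ - 1),
        N i j = (s • (1 : Matrix (Fin ρ) (Fin ρ) 𝕜) - Axi) ⟨(i : ℕ), by omega⟩
          ⟨(j : ℕ) + 1, by omega⟩) →
      N.det = (-1 : 𝕜) ^ (ρ - 1) := by
  intro s N hN
  have hTT : T * T⁻¹ = 1 := mul_nonsing_inv T hTinv
  -- Cbar * Sxi = 1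
  have hCS : ∀ a b : Fin ρ, (∑ k, Cbar a k * Sxi k b) = if (a : ℕ) = (b : ℕ) then 1 else 0 := by
    intro a b
    have ha : ¬ ((n - ρ + (a : ℕ)) < n - ρ) := by omega
    have key : (∑ k, Cbar a k * Sxi k b)
        = (T * T⁻¹) ⟨n - ρ + (a : ℕ), by omega⟩ ⟨n - ρ + (b : ℕ), by omega⟩ := by
      rw [Matrix.mul_apply]
      apply Finset.sum_congr rfl
      intro k _
      rw [hT, hSxi, dif_neg ha]
      simp [Nat.add_sub_cancel_left]
    rw [key, hTT, Matrix.one_apply]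
    simp only [Fin.mk.injEq]
    by_cases h : (a : ℕ) = (b : ℕ)
    · rw [if_pos (by omega), if_pos h]
    · rw [if_neg (by omega), if_neg h]
  -- rows of Cbar * A
  have hrow : ∀ (i : Fin ρ) (hi : (i : ℕ) + 1 < ρ), ∀ k : Fin n,
      (∑ m, Cbar i m * A m k) = Cbar ⟨(i : ℕ) + 1, hi⟩ k := by
    intro i hi k
    rw [hCbar]
    have h1 : (∑ m, Cbar i m * A m k) = (C * A ^ (i : ℕ) * A) 0 k := by
      rw [Matrix.mul_apply]
      apply Finset.sum_congr rfl
      intro m _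
      rw [hCbar]
    rw [h1]
    have h2 : C * A ^ (i : ℕ) * A = C * A ^ ((i : ℕ) + 1) := by
      rw [pow_succ, Matrix.mul_assoc]
    rw [h2]
  -- entries of Axi in first ρ-1 rows
  have hAxiE : ∀ (i j : Fin ρ) (hi : (i : ℕ) + 1 < ρ),
      Axi i j = if (i : ℕ) + 1 = (j : ℕ) then 1 else 0 := by
    intro i j hi
    rw [hAxi, Matrix.mul_apply]
    have h3 : (∑ k, (Cbar * A) i k * Sxi k j)
        = ∑ k, Cbar ⟨(i : ℕ) + 1, hi⟩ k * Sxi k j := by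
      apply Finset.sum_congr rfl
      intro k _
      rw [Matrix.mul_apply, hrow i hi k]
    rw [h3, hCS]
  -- explicit formula for N
  have hNE : ∀ i j : Fin (ρ - 1),
      N i j = (if (i : ℕ) = (j : ℕ) + 1 then s else 0) -
        (if (i : ℕ) = (j : ℕ) then 1 else 0) := by
    intro i j
    have hi : (i : ℕ) + 1 < ρ := by omega
    rw [hN, Matrix.sub_apply, Matrix.smul_apply, Matrix.one_apply, hAxiE _ _ hi]
    simp only [Fin.mk.injEq, smul_eq_mul]
    split_ifs <;> first | (exfalso; omega) | ring1
  -- N is lower triangular with -1 on the diagonal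
  have hbt : N.BlockTriangular OrderDual.toDual := by
    intro i j hij
    have h4 : (i : ℕ) < (j : ℕ) := hij
    rw [hNE, if_neg (by omega), if_neg (by omega), sub_zero]
  rw [Matrix.det_of_lowerTriangular N hbt]
  have h5 : ∀ i : Fin (ρ - 1), N i i = -1 := by
    intro i
    rw [hNE, if_neg (by omega), if_pos rfl, zero_sub]
  simp_rw [h5]
  simp
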